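/- Let α ∈ [0,1], let φ be a size-α test based on T and let ψ be a minimally discrete size-α test based on R, where R is injective and agrees with T, assume p₀(x) > 0 for every x ∈ 𝒳, and assume T is sufficient for the family. Then for every θ ∈ Θ the two tests have equal power: Σ_x ψ(x)p_θ(x) = Σ_x φ(x)p_θ(x). -/

import Mathlib

/-!
Both tests are monotone in the evidence, since `R` refines the order of `T`. If `T x > k` but
`ψ x < 1`, then wherever `ψ` rejects at all we have `T ≥ T x > k`, where `φ` rejects fully; so
`ψ ≤ φ`, and equal sizes with `p₀ > 0` force `ψ = φ`, a contradiction. Symmetrically `ψ = 0`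
below `k`, so the tests differ only on `{T = k}`. There sufficiency makes `p_θ` proportional to
`p₀`, so the power difference is a multiple of the size difference, which is `0`.
-/

open Set

section

variable {𝒳 : Type*}

theorem summable_of_tsum_eq_one {f : 𝒳 → ℝ} (h : ∑' x, f x = 1) : Summable f := by
  by_contra hf
  rw [tsum_eq_zero_of_not_summable hf] at h
  exact zero_ne_one h

theorem summable_mul_of_mem_Icc {f q : 𝒳 → ℝ} (hf : ∀ x, f x ∈ Icc (0 : ℝ) 1)
    (hq : ∀ x, 0 ≤ q x) (hqs : Summable q) : Summable fun x => f x * q x :=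
  hqs.of_nonneg_of_le (fun x => mul_nonneg (hf x).1 (hq x))
    fun x => mul_le_of_le_one_left (hq x) (hf x).2

theorem tsum_sub_mul {f g q : 𝒳 → ℝ} (hf : Summable fun x => f x * q x)
    (hg : Summable fun x => g x * q x) :
    ∑' x, (f x - g x) * q x = ∑' x, f x * q x - ∑' x, g x * q x := by
  simp_rw [sub_mul]
  exact hf.tsum_sub hg

theorem eq_of_le_of_tsum_mul_eq {w f g : 𝒳 → ℝ} (hw : ∀ x, 0 < w x) (hle : ∀ x, f x ≤ g x)
    (hf : Summable fun x => f x * w x) (hg : Summable fun x => g x * w x)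
    (h : ∑' x, f x * w x = ∑' x, g x * w x) : f = g := by
  by_contra hne
  obtain ⟨x, hx⟩ := Function.ne_iff.1 hne
  have hlt := hf.tsum_lt_tsum (fun y => mul_le_mul_of_nonneg_right (hle y) (hw y).le)
    (mul_lt_mul_of_pos_right ((hle x).lt_of_ne hx) (hw x)) hg
  exact hlt.ne h

theorem eq_of_pos_imp_eq_one {w f g : 𝒳 → ℝ} (hw : ∀ x, 0 < w x) (hws : Summable w)
    (hf : ∀ x, f x ∈ Icc (0 : ℝ) 1) (hg : ∀ x, g x ∈ Icc (0 : ℝ) 1)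
    (hfg : ∀ x, 0 < f x → g x = 1) (h : ∑' x, f x * w x = ∑' x, g x * w x) : f = g := by
  have hle : ∀ x, f x ≤ g x := fun x => by
    rcases (hf x).1.eq_or_lt with h0 | hpos
    · exact h0 ▸ (hg x).1
    · exact hfg x hpos ▸ (hf x).2
  exact eq_of_le_of_tsum_mul_eq hw hle
    (summable_mul_of_mem_Icc hf (fun x => (hw x).le) hws)
    (summable_mul_of_mem_Icc hg (fun x => (hw x).le) hws) h

section MDTest

variable {p₀ T φ ψ : 𝒳 → ℝ} {R : 𝒳 → ℕ} {k : ℝ} {kstar : ℕ}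

theorem mdTest_eq_one_of_gt (hp₀pos : ∀ x, 0 < p₀ x) (hp₀ : Summable p₀)
    (hφ01 : ∀ x, φ x ∈ Icc (0 : ℝ) 1) (hψ01 : ∀ x, ψ x ∈ Icc (0 : ℝ) 1)
    (hsize : ∑' x, ψ x * p₀ x = ∑' x, φ x * p₀ x)
    (hagree : ∀ x y, T x > T y → R x < R y) (hφ1 : ∀ x, T x > k → φ x = 1)
    (hψ1 : ∀ x, R x < kstar → ψ x = 1) (hψ3 : ∀ x, R x > kstar → ψ x = 0)
    {x : 𝒳} (hx : T x > k) : ψ x = 1 := by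
  by_contra hne
  have hRx : kstar ≤ R x := not_lt.1 fun h => hne (hψ1 x h)
  have hrej : ∀ y, 0 < ψ y → φ y = 1 := fun y hy => by
    have hRy : R y ≤ kstar := not_lt.1 fun h => hy.ne' (hψ3 y h)
    have hTy : T x ≤ T y := not_lt.1 fun h => (hagree x y h).not_ge (hRy.trans hRx)
    exact hφ1 y (hx.trans_le hTy)
  have hψφ : ψ = φ := eq_of_pos_imp_eq_one hp₀pos hp₀ hψ01 hφ01 hrej hsize
  exact hne (hψφ ▸ hφ1 x hx)

theorem mdTest_eq_zero_of_lt (hp₀pos : ∀ x, 0 < p₀ x) (hp₀ : Summable p₀)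
    (hφ01 : ∀ x, φ x ∈ Icc (0 : ℝ) 1) (hψ01 : ∀ x, ψ x ∈ Icc (0 : ℝ) 1)
    (hsize : ∑' x, ψ x * p₀ x = ∑' x, φ x * p₀ x)
    (hagree : ∀ x y, T x > T y → R x < R y) (hφ3 : ∀ x, T x < k → φ x = 0)
    (hψ1 : ∀ x, R x < kstar → ψ x = 1) (hψ3 : ∀ x, R x > kstar → ψ x = 0)
    {x : 𝒳} (hx : T x < k) : ψ x = 0 := by
  by_contra hne
  have hRx : R x ≤ kstar := not_lt.1 fun h => hne (hψ3 x h)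
  have hrej : ∀ y, 0 < φ y → ψ y = 1 := fun y hy => by
    have hTy : k ≤ T y := not_lt.1 fun h => hy.ne' (hφ3 y h)
    exact hψ1 y ((hagree y x (hx.trans_le hTy)).trans_le hRx)
  have hφψ : φ = ψ := eq_of_pos_imp_eq_one hp₀pos hp₀ hφ01 hψ01 hrej hsize.symm
  exact hne (hφψ ▸ hφ3 x hx)

theorem mdTest_eq_of_ne (hp₀pos : ∀ x, 0 < p₀ x) (hp₀ : Summable p₀)
    (hφ01 : ∀ x, φ x ∈ Icc (0 : ℝ) 1) (hψ01 : ∀ x, ψ x ∈ Icc (0 : ℝ) 1)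
    (hsize : ∑' x, ψ x * p₀ x = ∑' x, φ x * p₀ x)
    (hagree : ∀ x y, T x > T y → R x < R y)
    (hφ1 : ∀ x, T x > k → φ x = 1) (hφ3 : ∀ x, T x < k → φ x = 0)
    (hψ1 : ∀ x, R x < kstar → ψ x = 1) (hψ3 : ∀ x, R x > kstar → ψ x = 0)
    {x : 𝒳} (hx : T x ≠ k) : ψ x = φ x := by
  rcases hx.lt_or_gt with hlt | hgt
  · rw [hφ3 x hlt, mdTest_eq_zero_of_lt hp₀pos hp₀ hφ01 hψ01 hsize hagree hφ3 hψ1 hψ3 hlt]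
  · rw [hφ1 x hgt, mdTest_eq_one_of_gt hp₀pos hp₀ hφ01 hψ01 hsize hagree hφ1 hψ1 hψ3 hgt]

end MDTest

/-- `Pr_q{T = t}`. -/
noncomputable def levelMass (q T : 𝒳 → ℝ) (t : ℝ) : ℝ :=
  ∑' y, if T y = t then q y else 0

theorem levelMass_pos {q T : 𝒳 → ℝ} (hq : ∀ y, 0 ≤ q y) (hqs : Summable q) {x : 𝒳}
    (hx : 0 < q x) : 0 < levelMass q T (T x) := by
  have hnonneg : ∀ y, 0 ≤ if T y = T x then q y else 0 := fun y => by
    split_ifs <;> simp [hq y]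
  have hs : Summable fun y => if T y = T x then q y else 0 :=
    hqs.of_nonneg_of_le hnonneg fun y => by split_ifs <;> simp [hq y]
  have hle := hs.le_tsum x fun y _ => hnonneg y
  rw [if_pos rfl] at hle
  exact hx.trans_le hle

theorem tsum_mul_eq_levelMass_div_mul_of_sufficient {f q p₀ T : 𝒳 → ℝ} {k : ℝ}
    (hp₀pos : ∀ x, 0 < p₀ x) (hp₀ : Summable p₀) (hf : ∀ x, T x ≠ k → f x = 0)
    (hsuff : ∀ x, q x * levelMass p₀ T (T x) = p₀ x * levelMass q T (T x)) :
    ∑' x, f x * q x = levelMass q T k / levelMass p₀ T k * ∑' x, f x * p₀ x := by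
  rw [← tsum_mul_left]
  refine tsum_congr fun x => ?_
  by_cases hx : T x = k
  · have hpos := levelMass_pos (fun y => (hp₀pos y).le) hp₀ (hp₀pos x) (T := T)
    have hsuffx := hsuff x
    rw [hx] at hpos hsuffx
    field_simp
    linear_combination f x * hsuffx
  · simp [hf x hx]

end

theorem stmt_11_general {𝒳 : Type*} {Θ : Type*}
    (p : Θ → 𝒳 → ℝ) (hp : ∀ θ x, 0 ≤ p θ x) (hpsum : ∀ θ, ∑' x, p θ x = 1)
    (θ₀ : Θ) (p₀ : 𝒳 → ℝ) (hnull : p θ₀ = p₀)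
    (hp₀pos : ∀ x, 0 < p₀ x)
    (T : 𝒳 → ℝ) (R : 𝒳 → ℕ)
    (hagree : ∀ x y, T x > T y → R x < R y)
    (hsuff : ∀ (θ : Θ) (x : 𝒳),
      p θ x * (∑' y, if T y = T x then p₀ y else 0)
        = p₀ x * ∑' y, if T y = T x then p θ y else 0)
    (α : ℝ)
    (φ : 𝒳 → ℝ) (hφ01 : ∀ x, φ x ∈ Set.Icc (0:ℝ) 1)
    (k : ℝ)
    (hφ1 : ∀ x, T x > k → φ x = 1)
    (hφ3 : ∀ x, T x < k → φ x = 0) (hφα : ∑' x, φ x * p₀ x = α)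
    (ψ : 𝒳 → ℝ) (hψ01 : ∀ x, ψ x ∈ Set.Icc (0:ℝ) 1)
    (kstar : ℕ)
    (hψ1 : ∀ x, R x < kstar → ψ x = 1)
    (hψ3 : ∀ x, R x > kstar → ψ x = 0) (hψα : ∑' x, ψ x * p₀ x = α) :
    ∀ θ : Θ, ∑' x, ψ x * p θ x = ∑' x, φ x * p θ x := by
  intro θ
  have hsum : ∀ θ, Summable (p θ) := fun θ => summable_of_tsum_eq_one (hpsum θ)
  have hp₀ : Summable p₀ := hnull ▸ hsum θ₀
  have hsize : ∑' x, ψ x * p₀ x = ∑' x, φ x * p₀ x := hψα.trans hφα.symm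
  have hoff : ∀ x, T x ≠ k → ψ x - φ x = 0 := fun x hx => sub_eq_zero.2 <|
    mdTest_eq_of_ne hp₀pos hp₀ hφ01 hψ01 hsize hagree hφ1 hφ3 hψ1 hψ3 hx
  have hpower := tsum_mul_eq_levelMass_div_mul_of_sufficient hp₀pos hp₀ hoff (hsuff θ)
  have hψp₀ := summable_mul_of_mem_Icc hψ01 (fun x => (hp₀pos x).le) hp₀
  have hφp₀ := summable_mul_of_mem_Icc hφ01 (fun x => (hp₀pos x).le) hp₀
  rw [tsum_sub_mul (summable_mul_of_mem_Icc hψ01 (hp θ) (hsum θ))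
      (summable_mul_of_mem_Icc hφ01 (hp θ) (hsum θ)),
    tsum_sub_mul hψp₀ hφp₀, hsize, sub_self, mul_zero] at hpower
  exact sub_eq_zero.1 hpower

/-- If `φ` is a size-α test based on `T`, `ψ` an MD size-α test
based on `R` (injective, agreeing with `T`), `p₀ > 0` everywhere, and `T` is
sufficient for the family `{p_θ}` (i.e. `p_θ(x)·Pr₀{T(X)=T(x)} =
p₀(x)·Pr_θ{T(X)=T(x)}` for all `θ, x`), then the two tests have equal power:
`Σ_x ψ(x)p_θ(x) = Σ_x φ(x)p_θ(x)` for every `θ`. -/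
theorem stmt_11 {𝒳 : Type*} [Countable 𝒳] {Θ : Type*}
    (p : Θ → 𝒳 → ℝ) (hp : ∀ θ x, 0 ≤ p θ x) (hpsum : ∀ θ, ∑' x, p θ x = 1)
    (θ₀ : Θ) (p₀ : 𝒳 → ℝ) (hnull : p θ₀ = p₀)
    (hp₀pos : ∀ x, 0 < p₀ x)
    (T : 𝒳 → ℝ) (R : 𝒳 → ℕ) (hRinj : Function.Injective R)
    (hagree : ∀ x y, T x > T y → R x < R y)
    (hsuff : ∀ (θ : Θ) (x : 𝒳),
      p θ x * (∑' y, if T y = T x then p₀ y else 0)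
        = p₀ x * ∑' y, if T y = T x then p θ y else 0)
    (α : ℝ) (hα : α ∈ Set.Icc (0:ℝ) 1)
    (φ : 𝒳 → ℝ) (hφ01 : ∀ x, φ x ∈ Set.Icc (0:ℝ) 1)
    (k : ℝ) (γ : ℝ) (hγ : γ ∈ Set.Icc (0:ℝ) 1)
    (hφ1 : ∀ x, T x > k → φ x = 1) (hφ2 : ∀ x, T x = k → φ x = γ)
    (hφ3 : ∀ x, T x < k → φ x = 0) (hφα : ∑' x, φ x * p₀ x = α)
    (ψ : 𝒳 → ℝ) (hψ01 : ∀ x, ψ x ∈ Set.Icc (0:ℝ) 1)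
    (kstar : ℕ) (γstar : ℝ) (hγstar : γstar ∈ Set.Icc (0:ℝ) 1)
    (hψ1 : ∀ x, R x < kstar → ψ x = 1) (hψ2 : ∀ x, R x = kstar → ψ x = γstar)
    (hψ3 : ∀ x, R x > kstar → ψ x = 0) (hψα : ∑' x, ψ x * p₀ x = α) :
    ∀ θ : Θ, ∑' x, ψ x * p θ x = ∑' x, φ x * p θ x :=
  stmt_11_general p hp hpsum θ₀ p₀ hnull hp₀pos T R hagree hsuff α φ hφ01 k hφ1 hφ3 hφα ψ hψ01 kstar
    hψ1 hψ3 hψα
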